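/- arXiv:2510.17630 — 4 statements merged into one kernel-verified Lean document; each statement's English description precedes it below -/
import Mathlib

section
/- Let n ≥ 3, let A be a confined partial n-gon, and let F(A) be the free completion of A. If B ⊆ F(A) is finite and confined, then B ⊆ A. -/
/-- A partial `n`-gon: a bipartite graph (bipartition given by `sort`, with the two
sorts thought of as points and lines, and edges as incidences) of girth at least `2n`. -/
def IsPartialNGon {V : Type} (n : ℕ) (G : SimpleGraph V) (sort : V → Bool) : Prop :=
  (∀ v w, G.Adj v w → sort v ≠ sort w) ∧ (2 * n : ℕ∞) ≤ G.egirth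

/-- The valency of `v` within the subset `B`, i.e. the (extended) number of
neighbours of `v` lying in `B`. -/
noncomputable def valencyIn {V : Type} (G : SimpleGraph V) (B : Set V) (v : V) : ℕ∞ :=
  {w ∈ B | G.Adj v w}.encard

/-- `a` is a loose end in `B`: an element of `B` incident with at most one element of `B`. -/
def IsLooseEndIn {V : Type} (G : SimpleGraph V) (B : Set V) (a : V) : Prop :=
  a ∈ B ∧ valencyIn G B a ≤ 1

/-- `l` is a clean arc in `B`: a chain of `n - 2` distinct elements of `B`, consecutively
incident, each of which is incident to exactly two elements of `B`. -/
def IsCleanArcIn {V : Type} (n : ℕ) (G : SimpleGraph V) (B : Set V) (l : List V) : Prop :=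
  l.length = n - 2 ∧ l.Nodup ∧ l.Chain' G.Adj ∧ ∀ x ∈ l, x ∈ B ∧ valencyIn G B x = 2

/-- `B` contains a hyperfree tuple: a loose end or a clean arc. -/
def HasHyperfreeIn {V : Type} (n : ℕ) (G : SimpleGraph V) (B : Set V) : Prop :=
  (∃ a, IsLooseEndIn G B a) ∨ (∃ l, IsCleanArcIn n G B l)

/-- A subset `B` (of a partial `n`-gon) is confined if every element of `B` is contained
in a finite subset of `B` containing no hyperfree tuple. For finite `B` this is equivalent
to `B` itself containing no hyperfree tuple. -/
def ConfinedSet {V : Type} (n : ℕ) (G : SimpleGraph V) (B : Set V) : Prop :=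
  ∀ v ∈ B, ∃ C : Set V, v ∈ C ∧ C ⊆ B ∧ C.Finite ∧ ¬ HasHyperfreeIn n G C

/-- The pairs of elements of a partial `n`-gon to which the free completion process
attaches a new clean arc: pairs at distance `n + 1` within the current configuration, or
pairs at distance `∞` which are of the appropriate sorts (the same sort if `n` is odd,
different sorts if `n` is even). -/
def NeedsArc {V : Type} (n : ℕ) (G : SimpleGraph V) (sort : V → Bool)
    (B : Set V) (a b : V) (ha : a ∈ B) (hb : b ∈ B) : Prop :=
  (G.induce B).edist ⟨a, ha⟩ ⟨b, hb⟩ = (n + 1 : ℕ) ∨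
    ((G.induce B).edist ⟨a, ha⟩ ⟨b, hb⟩ = ⊤ ∧ (sort a = sort b ↔ Odd n))

/-- `A : ℕ → Set V` is the tower of stages of the free completion of the partial `n`-gon
`A 0`, inside the ambient graph `G` whose vertex set is the free completion `F(A 0)`:
the stages are increasing and exhaust `V`; every element added at stage `i + 1` lies on a
clean arc, freshly attached between two elements `a, b` of stage `i` at distance `n + 1`
(or at distance `∞` and of the appropriate sorts), whose elements are incident to exactly
two elements of stage `i + 1`; and conversely an arc is attached to every such pair. -/
structure IsFreeCompletionTower {V : Type} (n : ℕ) (G : SimpleGraph V) (sort : V → Bool)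
    (A : ℕ → Set V) : Prop where
  mono : ∀ i, A i ⊆ A (i + 1)
  exhaustive : ∀ v : V, ∃ i, v ∈ A i
  step : ∀ i, ∀ v ∈ A (i + 1) \ A i, ∃ (l : List V) (a b : V) (ha : a ∈ A i) (hb : b ∈ A i),
    NeedsArc n G sort (A i) a b ha hb ∧
    v ∈ l ∧ l.length = n - 2 ∧ l.Nodup ∧ (∀ x ∈ l, x ∈ A (i + 1) \ A i) ∧
    List.Chain' G.Adj (a :: (l ++ [b])) ∧
    (∀ x ∈ l, valencyIn G (A (i + 1)) x = 2)
  complete : ∀ i, ∀ a b, ∀ (ha : a ∈ A i) (hb : b ∈ A i),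
    NeedsArc n G sort (A i) a b ha hb → ∃ l : List V,
      l.length = n - 2 ∧ l.Nodup ∧ (∀ x ∈ l, x ∈ A (i + 1) \ A i) ∧
      List.Chain' G.Adj (a :: (l ++ [b]))

/-- Let `n ≥ 3`, let `A` be a confined partial `n`-gon, and let `F(A)` be its
free completion (here: `G` is a graph on the vertex set `F(A)` of the free completion, and
`A 0` is the original configuration `A`). If `B ⊆ F(A)` is finite and confined, then `B ⊆ A`. -/
theorem finite_confined_subset_of_free_completion {V : Type} (n : ℕ) (hn : 3 ≤ n)
    (G : SimpleGraph V) (sort : V → Bool) (A : ℕ → Set V)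
    (hngon : IsPartialNGon n G sort)
    (htower : IsFreeCompletionTower n G sort A)
    (hconf : ConfinedSet n G (A 0))
    (B : Set V) (hBfin : B.Finite) (hBconf : ¬ HasHyperfreeIn n G B) :
    B ⊆ A 0 := by
  classical
  have hmono : ∀ {i j : ℕ}, i ≤ j → A i ⊆ A j := fun hij =>
    monotone_nat_of_le_succ (f := A) htower.mono hij
  have hex : ∃ i, B ⊆ A i := by
    refine ⟨hBfin.toFinset.sup fun v => (htower.exhaustive v).choose, fun v hv => ?_⟩
    exact hmono (Finset.le_sup (hBfin.mem_toFinset.mpr hv)) (htower.exhaustive v).choose_spec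
  obtain ⟨i, hi⟩ := hex
  induction i with
  | zero => exact hi
  | succ j ih =>
    by_cases hAj : B ⊆ A j
    · exact ih hAj
    exfalso
    obtain ⟨v, hvB, hvj⟩ := Set.not_subset.mp hAj
    obtain ⟨l, a, b, ha, hb, hneeds, hvl, hlen, hnodup, hlsub, hchain, hval⟩ :=
      htower.step j v ⟨hi hvB, hvj⟩
    have hlen1 : 1 ≤ l.length := by omega
    set p : List V := a :: (l ++ [b]) with hp
    have hplen : p.length = l.length + 2 := by simp [hp]
    set f : ℕ → V := fun m => p.getD m a with hfdef
    have hf0 : f 0 = a := rfl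
    have hfl : ∀ m, m < l.length → ∀ (h : m < l.length), f (m + 1) = l[m]'h := by
      intro m hm h
      show (a :: (l ++ [b])).getD (m + 1) a = l[m]
      rw [List.getD_cons_succ, List.getD_append _ _ _ _ hm, List.getD_eq_getElem _ _ hm]
    have hfb : f (l.length + 1) = b := by
      show (a :: (l ++ [b])).getD (l.length + 1) a = b
      rw [List.getD_cons_succ, List.getD_append_right _ _ _ _ (le_refl _)]
      simp
    have hfp : ∀ m, m < p.length → ∀ (h : m < p.length), f m = p[m]'h := by
      intro m hm h
      exact List.getD_eq_getElem p a h
    -- basic facts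
    have hanl : a ∉ l := fun h => (hlsub a h).2 ha
    have hbnl : b ∉ l := fun h => (hlsub b h).2 hb
    have hab : a ≠ b := by
      intro h
      have h0 : (G.induce (A j)).edist ⟨a, ha⟩ ⟨b, hb⟩ = 0 := by
        subst h
        exact SimpleGraph.edist_self
      rcases hneeds with h1 | h2
      · rw [h0] at h1
        exact absurd h1.symm (by simp)
      · rw [h0] at h2
        exact absurd h2.1.symm (by simp)
    have hpnodup : p.Nodup := by
      refine List.nodup_cons.mpr ⟨?_, ?_⟩
      · simp only [List.mem_append, List.mem_singleton]
        rintro (h | h)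
        · exact hanl h
        · exact hab h
      · refine List.Nodup.append hnodup (List.nodup_singleton b) ?_
        intro x hx hx'
        simp only [List.mem_singleton] at hx'
        subst hx'
        exact hbnl hx
    have hinjf : ∀ m1 m2, m1 < p.length → m2 < p.length → f m1 = f m2 → m1 = m2 := by
      intro m1 m2 h1 h2 hEq
      rw [hfp m1 h1 h1, hfp m2 h2 h2] at hEq
      exact (List.Nodup.getElem_inj_iff hpnodup).mp hEq
    have hadjf : ∀ m, m + 1 < p.length → G.Adj (f m) (f (m + 1)) := by
      intro m hm
      have h1 : m < p.length := by omega
      rw [hfp m h1 h1, hfp (m + 1) hm hm]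
      have := List.isChain_iff_getElem.mp hchain m (by omega)
      simpa using this
    have hfA : ∀ m, m < p.length → f m ∈ A (j + 1) := by
      intro m hm
      match m with
      | 0 => exact htower.mono j ha
      | Nat.succ m =>
        rcases lt_or_ge m l.length with h | h
        · rw [hfl m h h]
          exact (hlsub _ (List.getElem_mem h)).1
        · have hm' : m = l.length := by omega
          subst hm'
          rw [hfb]
          exact htower.mono j hb
    -- loose end helper
    have hloose : ∀ x ∈ l, ∀ c, c ∈ A (j + 1) → G.Adj x c → c ∉ B → x ∈ B → False := by
      intro x hx c hcA hadjc hcB hxB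
      apply hBconf
      left
      refine ⟨x, hxB, ?_⟩
      have hS : ({w ∈ A (j + 1) | G.Adj x w} : Set V).encard = 2 := hval x hx
      have hcS : c ∈ {w ∈ A (j + 1) | G.Adj x w} := ⟨hcA, hadjc⟩
      have hsub2 : {w ∈ B | G.Adj x w} ⊆ {w ∈ A (j + 1) | G.Adj x w} \ {c} := by
        rintro w ⟨hwB, hwadj⟩
        refine ⟨⟨hi hwB, hwadj⟩, fun h => hcB ?_⟩
        rw [Set.mem_singleton_iff] at h
        rwa [h] at hwB
      have hd : ({w ∈ A (j + 1) | G.Adj x w} \ {c}).encard = 1 := by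
        rw [Set.encard_diff_singleton_of_mem hcS, hS]
        rfl
      calc valencyIn G B x ≤ ({w ∈ A (j + 1) | G.Adj x w} \ {c}).encard :=
            Set.encard_mono hsub2
        _ = 1 := hd
    by_cases hbad : ∃ m, ∃ (hm : m < l.length), l[m]'hm ∈ B ∧ (f m ∉ B ∨ f (m + 2) ∉ B)
    · obtain ⟨m, hm, hxB, hor⟩ := hbad
      have hxl : l[m]'hm ∈ l := List.getElem_mem hm
      have hflm := hfl m hm hm
      rcases hor with hc | hc
      · refine hloose _ hxl (f m) (hfA m (by omega)) ?_ hc hxB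
        have := hadjf m (by omega)
        rw [hflm] at this
        exact this.symm
      · refine hloose _ hxl (f (m + 2)) (hfA (m + 2) (by omega)) ?_ hc hxB
        have := hadjf (m + 1) (by omega)
        rw [hflm] at this
        exact this
    · have hall : ∀ m (hm : m < l.length), l[m]'hm ∈ B → (f m ∈ B ∧ f (m + 2) ∈ B) := by
        intro m hm hxB
        by_contra hc
        exact hbad ⟨m, hm, hxB, by tauto⟩
      obtain ⟨k0, hk0, hvk⟩ := List.mem_iff_getElem.mp hvl
      have hfk0 : f (k0 + 1) ∈ B := by
        rw [hfl k0 hk0 hk0, hvk]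
        exact hvB
      have hallf : ∀ m, 1 ≤ m → m ≤ l.length → f m ∈ B → (f (m - 1) ∈ B ∧ f (m + 1) ∈ B) := by
        intro m h1 h2 hfB
        have hm' : m - 1 < l.length := by omega
        have := hall (m - 1) hm' (by rw [← hfl (m - 1) hm' hm', show m - 1 + 1 = m by omega]; exact hfB)
        rwa [show m - 1 + 2 = m + 1 by omega] at this
      have hdown : ∀ t, t ≤ k0 + 1 → f (k0 + 1 - t) ∈ B := by
        intro t
        induction t with
        | zero => intro _; simpa using hfk0
        | succ t iht =>
          intro ht
          have hprev := iht (by omega)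
          have := (hallf (k0 + 1 - t) (by omega) (by omega) hprev).1
          rwa [show k0 + 1 - t - 1 = k0 + 1 - (t + 1) by omega] at this
      have hup : ∀ t, k0 + 1 + t ≤ l.length + 1 → f (k0 + 1 + t) ∈ B := by
        intro t
        induction t with
        | zero => intro _; simpa using hfk0
        | succ t iht =>
          intro ht
          have hprev := iht (by omega)
          have := (hallf (k0 + 1 + t) (by omega) (by omega) hprev).2
          rwa [show k0 + 1 + t + 1 = k0 + 1 + (t + 1) by omega] at this
      have hfB : ∀ m, m ≤ l.length + 1 → f m ∈ B := by
        intro m hm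
        rcases le_or_gt m (k0 + 1) with h | h
        · have := hdown (k0 + 1 - m) (by omega)
          rwa [show k0 + 1 - (k0 + 1 - m) = m by omega] at this
        · have := hup (m - (k0 + 1)) (by omega)
          rwa [show k0 + 1 + (m - (k0 + 1)) = m by omega] at this
      -- l is a clean arc in B
      apply hBconf
      right
      refine ⟨l, hlen, hnodup, ?_, ?_⟩
      · have h1 : List.Chain' G.Adj ((a :: (l ++ [b])).tail) := hchain.tail
        exact (List.isChain_append.mp h1).1
      · intro x hx
        obtain ⟨m, hm, hmx⟩ := List.mem_iff_getElem.mp hx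
        have hfx : f (m + 1) = x := by rw [hfl m hm hm, hmx]
        constructor
        · rw [← hfx]
          exact hfB (m + 1) (by omega)
        · have hle : valencyIn G B x ≤ valencyIn G (A (j + 1)) x :=
            Set.encard_mono (fun w hw => ⟨hi hw.1, hw.2⟩)
          rw [hval x hx] at hle
          have hadj1 : G.Adj x (f m) := by
            have := hadjf m (by omega)
            rw [hfx] at this
            exact this.symm
          have hadj2 : G.Adj x (f (m + 2)) := by
            have := hadjf (m + 1) (by omega)
            rw [hfx] at this
            exact this
          have hne : f m ≠ f (m + 2) := by
            intro h
            have := hinjf m (m + 2) (by omega) (by omega) h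
            omega
          have hpairsub : ({f m, f (m + 2)} : Set V) ⊆ {w ∈ B | G.Adj x w} := by
            rintro w (rfl | rfl)
            · exact ⟨hfB m (by omega), hadj1⟩
            · exact ⟨hfB (m + 2) (by omega), hadj2⟩
          have hge : 2 ≤ valencyIn G B x := by
            rw [← Set.encard_pair hne]
            exact Set.encard_mono hpairsub
          exact le_antisymm hle hge
end

section
/- Let B be the graph consisting of two disjoint copies A_1, A_2 of the Heawood graph together with new vertices p (adjacent to a_1, b_1, ℓ) and ℓ (adjacent to a_4, b_4, p). Then every graph embedding of the Heawood graph into B has image equal to A_1 or A_2. -/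
/-- The list of base edges of the Heawood graph on vertices `1, ..., 14`:
the 14-cycle together with the seven chords. -/
def heawoodPairs : List (ℕ × ℕ) :=
  [(1,2),(2,3),(3,4),(4,5),(5,6),(6,7),(7,8),(8,9),(9,10),(10,11),(11,12),(12,13),(13,14),(14,1),
   (1,10),(2,7),(3,12),(4,9),(5,14),(6,11),(8,13)]

/-- The Heawood graph, on vertex set `Fin 14`, where the vertex `i : Fin 14`
represents the vertex `a_{i+1}` of the paper. -/
def heawood : SimpleGraph (Fin 14) :=
  SimpleGraph.fromRel (fun i j => (i.val + 1, j.val + 1) ∈ heawoodPairs)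

instance : DecidableRel heawood.Adj := fun a b =>
  decidable_of_iff _ (SimpleGraph.fromRel_adj _ a b).symm

/-- The graph `B`: two disjoint copies of the Heawood graph (`a_i`, represented by the
vertices `0, ..., 13`, and `b_i`, represented by `14, ..., 27`) together with a new point
`p` (vertex `28`) adjacent to `a₁`, `b₁`, `ℓ`, and a new line `ℓ` (vertex `29`) adjacent
to `a₄`, `b₄`, `p`. -/
def heawoodDoublePairs : List (ℕ × ℕ) :=
  (heawoodPairs.map (fun q => (q.1 - 1, q.2 - 1))) ++
  (heawoodPairs.map (fun q => (q.1 + 13, q.2 + 13))) ++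
  [(28, 0), (28, 14), (28, 29), (29, 3), (29, 17)]

def heawoodDouble : SimpleGraph (Fin 30) :=
  SimpleGraph.fromRel (fun i j => (i.val, j.val) ∈ heawoodDoublePairs)

/-- The sorting of the vertices of `B` into points (`true`) and lines (`false`):
in each copy of the Heawood graph the even-indexed vertices `a_{2i}`, `b_{2i}` are points
and the odd-indexed ones are lines; `p` is a point and `ℓ` is a line. -/
def heawoodDoubleSort : Fin 30 → Bool := fun v =>
  if v.val = 28 then true else if v.val = 29 then false else decide (v.val % 2 = 1)

instance : DecidableRel heawoodDouble.Adj := fun a b =>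
  decidable_of_iff _ (SimpleGraph.fromRel_adj _ a b).symm

/-- The three neighbours of each Heawood vertex. -/
def heawoodNbrs (v : Fin 14) : Fin 14 × Fin 14 × Fin 14 :=
  [((1:Fin 14),(9:Fin 14),(13:Fin 14)),(0,2,6),(1,3,11),(2,4,8),(3,5,13),(4,6,10),(1,5,7),
   (6,8,12),(3,7,9),(0,8,10),(5,9,11),(2,10,12),(7,11,13),(0,4,12)].getD v.val (0,0,0)

lemma heawoodNbrs_spec : ∀ v : Fin 14,
    heawood.Adj v (heawoodNbrs v).1 ∧ heawood.Adj v (heawoodNbrs v).2.1 ∧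
    heawood.Adj v (heawoodNbrs v).2.2 ∧ (heawoodNbrs v).1 ≠ (heawoodNbrs v).2.1 ∧
    (heawoodNbrs v).1 ≠ (heawoodNbrs v).2.2 ∧ (heawoodNbrs v).2.1 ≠ (heawoodNbrs v).2.2 := by
  decide

/-- Hexagon-completion witnesses: for `v` with distinct neighbours `x, y`, a path
`x - w₁ - w₂ - w₃ - y` avoiding `v`. -/
def hexTable : List ((Fin 14 × Fin 14 × Fin 14) × (Fin 14 × Fin 14 × Fin 14)) :=
  [((0,1,9),(2,11,10)),((0,1,13),(2,11,12)),((0,9,1),(8,3,2)),((0,9,13),(8,3,4)),((0,13,1),(12,11,2)),((0,13,9),(12,11,10)),((1,0,2),(13,12,11)),((1,0,6),(13,12,7)),((1,2,0),(11,10,9)),((1,2,6),(11,10,5)),((1,6,0),(5,10,9)),((1,6,2),(5,10,11)),((2,1,3),(0,13,4)),((2,1,11),(0,13,12)),((2,3,1),(8,9,0)),((2,3,11),(8,9,10)),((2,11,1),(10,9,0)),((2,11,3),(10,9,8)),((3,2,4),(11,10,5)),((3,2,8),(11,10,9)),((3,4,2),(13,0,1)),((3,4,8),(13,0,9)),((3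,8,2),(9,0,1)),((3,8,4),(9,0,13)),((4,3,5),(8,9,10)),((4,3,13),(8,9,0)),((4,5,3),(10,9,8)),((4,5,13),(10,9,0)),((4,13,3),(0,1,2)),((4,13,5),(0,1,6)),((5,4,6),(13,0,1)),((5,4,10),(13,0,9)),((5,6,4),(1,0,13)),((5,6,10),(1,0,9)),((5,10,4),(9,8,3)),((5,10,6),(9,8,7)),((6,1,5),(0,13,4)),((6,1,7),(0,13,12)),((6,5,1),(10,9,0)),((6,5,7),(10,9,8)),((6,7,1),(8,9,0)),((6,7,5),(8,9,10)),((7,6,8),(1,0,9)),((7,6,12),(1,0,13)),((7,8,6),(9,0,1)),((7,8,12),(9,0,13)),((7,12,6),(11,10,5)),((7,12,8),(11,10,9)),((8,3,7),(2,11,12)),((8,3,9),(2,11,10)),((8,7,3),(12,11,2)),((8,7,9),(12,11,10)),((8,9,3),(0,1,2)),((8,9,7),(0,1,6)),((9,0,8),(1,2,3)),((9,0,10),(1,2,11)),((9,8,0),(3,2,1)),((9,8,10),(3,2,11)),((9,10,0),(11,2,1)),((9,10,8),(11,2,3)),((10,5,9),(4,13,0)),((10,5,11),(4,13,12)),((1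0,9,5),(8,3,4)),((10,9,11),(8,3,2)),((10,11,5),(2,1,6)),((10,11,9),(2,1,0)),((11,2,10),(1,0,9)),((11,2,12),(1,0,13)),((11,10,2),(9,8,3)),((11,10,12),(9,8,7)),((11,12,2),(13,0,1)),((11,12,10),(13,0,9)),((12,7,11),(8,9,10)),((12,7,13),(8,9,0)),((12,11,7),(10,9,8)),((12,11,13),(10,9,0)),((12,13,7),(0,1,6)),((12,13,11),(0,1,2)),((13,0,4),(1,2,3)),((13,0,12),(1,2,11)),((13,4,0),(3,8,9)),((13,4,12),(3,8,7)),((13,12,0),(11,10,9)),((13,12,4),(11,10,5))]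

def hexWit (v x y : Fin 14) : Fin 14 × Fin 14 × Fin 14 :=
  match hexTable.find? (fun e => decide (e.1 = (v, x, y))) with
  | some e => e.2
  | none => (0, 0, 0)

lemma hexWit_spec : ∀ v x y : Fin 14, heawood.Adj v x → heawood.Adj v y → x ≠ y →
    heawood.Adj x (hexWit v x y).1 ∧ heawood.Adj (hexWit v x y).1 (hexWit v x y).2.1 ∧
    heawood.Adj (hexWit v x y).2.1 (hexWit v x y).2.2 ∧
    heawood.Adj (hexWit v x y).2.2 y ∧
    (hexWit v x y).1 ≠ v ∧ (hexWit v x y).2.1 ≠ v ∧ (hexWit v x y).2.2 ≠ v := by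
  decide

/-- Distances from vertex `0` in `B - 28` (value at index `28` is junk). -/
def phiL : List ℕ := [0,1,2,3,2,3,2,3,2,1,2,3,2,1,8,7,6,5,6,7,8,7,6,7,8,7,8,7,99,4]
def phiD (v : Fin 30) : ℕ := phiL.getD v.val 0

/-- Distances from vertex `3` in `B - 29` (value at index `29` is junk). -/
def psiL : List ℕ := [3,2,1,0,1,2,3,2,1,2,3,2,3,2,5,6,7,8,7,8,7,8,7,6,7,8,7,6,4,99]
def psiD (v : Fin 30) : ℕ := psiL.getD v.val 0

lemma phiD_adj : ∀ u v : Fin 30, heawoodDouble.Adj u v → u ≠ 28 → v ≠ 28 →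
    phiD v ≤ phiD u + 1 := by decide

lemma psiD_adj : ∀ u v : Fin 30, heawoodDouble.Adj u v → u ≠ 29 → v ≠ 29 →
    psiD v ≤ psiD u + 1 := by decide

lemma adj28 : ∀ u : Fin 30, heawoodDouble.Adj 28 u → u = 0 ∨ u = 14 ∨ u = 29 := by decide

lemma adj29 : ∀ u : Fin 30, heawoodDouble.Adj 29 u → u = 3 ∨ u = 17 ∨ u = 28 := by decide

lemma side_adj : ∀ u v : Fin 30, heawoodDouble.Adj u v → u ≠ 28 → u ≠ 29 → v ≠ 28 → v ≠ 29 →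
    (u.val < 14 ↔ v.val < 14) := by decide

lemma heawood_cycle_adj : ∀ i j : Fin 14, j.val = i.val + 1 → heawood.Adj i j := by decide

lemma heawood_reachable : ∀ w : Fin 14, heawood.Reachable 0 w := by
  have step : ∀ n : ℕ, ∀ h : n < 14, heawood.Reachable 0 ⟨n, h⟩ := by
    intro n
    induction n with
    | zero => intro h; exact SimpleGraph.Reachable.refl _
    | succ n ih =>
      intro h
      have h' : n < 14 := Nat.lt_of_succ_lt h
      exact (ih h').trans (SimpleGraph.Adj.reachable
        (heawood_cycle_adj ⟨n, h'⟩ ⟨n + 1, h⟩ rfl))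
  rintro ⟨n, h⟩
  exact step n h

/-- every graph embedding of the Heawood graph into `B` has image equal to
the first copy `A₁ = {0, ..., 13}` or the second copy `A₂ = {14, ..., 27}`. -/
theorem heawood_embedding_into_heawoodDouble (f : heawood ↪g heawoodDouble) :
    Set.range (f : Fin 14 → Fin 30) = {v : Fin 30 | v.val < 14} ∨
    Set.range (f : Fin 14 → Fin 30) = {v : Fin 30 | 14 ≤ v.val ∧ v.val < 28} := by
  have hinj : Function.Injective (f : Fin 14 → Fin 30) := f.injective
  have hmap : ∀ {a b : Fin 14}, heawood.Adj a b → heawoodDouble.Adj (f a) (f b) :=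
    fun h => f.map_adj_iff.mpr h
  -- key lemma for excluding 28
  have key0 : ∀ v a b : Fin 14, heawood.Adj v a → heawood.Adj v b →
      f v = 28 → f a = 0 → f b = 14 → False := by
    intro v a b ha hb h28 hfa hfb
    have hab : a ≠ b := fun h => by rw [h, hfb] at hfa; exact absurd hfa (by decide)
    obtain ⟨p1, p2, p3, p4, q1, q2, q3⟩ := hexWit_spec v a b ha hb hab
    set w1 := (hexWit v a b).1
    set w2 := (hexWit v a b).2.1
    set w3 := (hexWit v a b).2.2
    have n1 : f w1 ≠ 28 := fun h => q1 (hinj (h.trans h28.symm))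
    have n2 : f w2 ≠ 28 := fun h => q2 (hinj (h.trans h28.symm))
    have n3 : f w3 ≠ 28 := fun h => q3 (hinj (h.trans h28.symm))
    have na : f a ≠ 28 := by rw [hfa]; decide
    have nb : f b ≠ 28 := by rw [hfb]; decide
    have e1 := phiD_adj (f a) (f w1) (hmap p1) na n1
    have e2 := phiD_adj (f w1) (f w2) (hmap p2) n1 n2
    have e3 := phiD_adj (f w2) (f w3) (hmap p3) n2 n3
    have e4 := phiD_adj (f w3) (f b) (hmap p4) n3 nb
    rw [hfa] at e1
    rw [hfb] at e4
    have h0 : phiD 0 = 0 := by decide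
    have h14 : phiD 14 = 8 := by decide
    omega
  -- key lemma for excluding 29
  have key1 : ∀ v a b : Fin 14, heawood.Adj v a → heawood.Adj v b →
      f v = 29 → f a = 3 → f b = 17 → False := by
    intro v a b ha hb h29 hfa hfb
    have hab : a ≠ b := fun h => by rw [h, hfb] at hfa; exact absurd hfa (by decide)
    obtain ⟨p1, p2, p3, p4, q1, q2, q3⟩ := hexWit_spec v a b ha hb hab
    set w1 := (hexWit v a b).1
    set w2 := (hexWit v a b).2.1
    set w3 := (hexWit v a b).2.2
    have n1 : f w1 ≠ 29 := fun h => q1 (hinj (h.trans h29.symm))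
    have n2 : f w2 ≠ 29 := fun h => q2 (hinj (h.trans h29.symm))
    have n3 : f w3 ≠ 29 := fun h => q3 (hinj (h.trans h29.symm))
    have na : f a ≠ 29 := by rw [hfa]; decide
    have nb : f b ≠ 29 := by rw [hfb]; decide
    have e1 := psiD_adj (f a) (f w1) (hmap p1) na n1
    have e2 := psiD_adj (f w1) (f w2) (hmap p2) n1 n2
    have e3 := psiD_adj (f w2) (f w3) (hmap p3) n2 n3
    have e4 := psiD_adj (f w3) (f b) (hmap p4) n3 nb
    rw [hfa] at e1
    rw [hfb] at e4
    have h0 : psiD 3 = 0 := by decide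
    have h17 : psiD 17 = 8 := by decide
    omega
  have no28 : ∀ v : Fin 14, f v ≠ 28 := by
    intro v h28
    obtain ⟨hn1, hn2, hn3, d12, d13, d23⟩ := heawoodNbrs_spec v
    set n1 := (heawoodNbrs v).1
    set n2 := (heawoodNbrs v).2.1
    set n3 := (heawoodNbrs v).2.2
    have a1 : f n1 = 0 ∨ f n1 = 14 ∨ f n1 = 29 := adj28 (f n1) (h28 ▸ hmap hn1)
    have a2 : f n2 = 0 ∨ f n2 = 14 ∨ f n2 = 29 := adj28 (f n2) (h28 ▸ hmap hn2)
    have a3 : f n3 = 0 ∨ f n3 = 14 ∨ f n3 = 29 := adj28 (f n3) (h28 ▸ hmap hn3)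
    rcases a1 with e1 | e1 | e1 <;> rcases a2 with e2 | e2 | e2 <;> rcases a3 with e3 | e3 | e3 <;>
      first
        | exact key0 v n1 n2 hn1 hn2 h28 ‹f n1 = 0› ‹f n2 = 14›
        | exact key0 v n1 n3 hn1 hn3 h28 ‹f n1 = 0› ‹f n3 = 14›
        | exact key0 v n2 n1 hn2 hn1 h28 ‹f n2 = 0› ‹f n1 = 14›
        | exact key0 v n2 n3 hn2 hn3 h28 ‹f n2 = 0› ‹f n3 = 14›
        | exact key0 v n3 n1 hn3 hn1 h28 ‹f n3 = 0› ‹f n1 = 14›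
        | exact key0 v n3 n2 hn3 hn2 h28 ‹f n3 = 0› ‹f n2 = 14›
        | exact d12 (hinj (e1.trans e2.symm))
        | exact d13 (hinj (e1.trans e3.symm))
        | exact d23 (hinj (e2.trans e3.symm))
  have no29 : ∀ v : Fin 14, f v ≠ 29 := by
    intro v h29
    obtain ⟨hn1, hn2, hn3, d12, d13, d23⟩ := heawoodNbrs_spec v
    set n1 := (heawoodNbrs v).1
    set n2 := (heawoodNbrs v).2.1
    set n3 := (heawoodNbrs v).2.2
    have a1 : f n1 = 3 ∨ f n1 = 17 ∨ f n1 = 28 := adj29 (f n1) (h29 ▸ hmap hn1)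
    have a2 : f n2 = 3 ∨ f n2 = 17 ∨ f n2 = 28 := adj29 (f n2) (h29 ▸ hmap hn2)
    have a3 : f n3 = 3 ∨ f n3 = 17 ∨ f n3 = 28 := adj29 (f n3) (h29 ▸ hmap hn3)
    rcases a1 with e1 | e1 | e1 <;> rcases a2 with e2 | e2 | e2 <;> rcases a3 with e3 | e3 | e3 <;>
      first
        | exact key1 v n1 n2 hn1 hn2 h29 ‹f n1 = 3› ‹f n2 = 17›
        | exact key1 v n1 n3 hn1 hn3 h29 ‹f n1 = 3› ‹f n3 = 17›
        | exact key1 v n2 n1 hn2 hn1 h29 ‹f n2 = 3› ‹f n1 = 17›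
        | exact key1 v n2 n3 hn2 hn3 h29 ‹f n2 = 3› ‹f n3 = 17›
        | exact key1 v n3 n1 hn3 hn1 h29 ‹f n3 = 3› ‹f n1 = 17›
        | exact key1 v n3 n2 hn3 hn2 h29 ‹f n3 = 3› ‹f n2 = 17›
        | exact no28 n1 e1
        | exact no28 n2 e2
        | exact no28 n3 e3
        | exact d12 (hinj (e1.trans e2.symm))
        | exact d13 (hinj (e1.trans e3.symm))
        | exact d23 (hinj (e2.trans e3.symm))
  -- side preservation along walks
  have hwalk : ∀ (u w : Fin 14), heawood.Walk u w → ((f u).val < 14 ↔ (f w).val < 14) := by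
    intro u w p
    induction p with
    | nil => exact Iff.rfl
    | @cons a b c hab p ih =>
      exact (side_adj (f a) (f b) (hmap hab) (no28 a) (no29 a) (no28 b) (no29 b)).trans ih
  have hside : ∀ w : Fin 14, ((f 0).val < 14 ↔ (f w).val < 14) := by
    intro w
    obtain ⟨p⟩ := heawood_reachable w
    exact hwalk 0 w p
  have hval28 : ∀ w : Fin 14, (f w).val ≠ 28 := fun w h => no28 w (Fin.ext h)
  have hval29 : ∀ w : Fin 14, (f w).val ≠ 29 := fun w h => no29 w (Fin.ext h)
  by_cases hc : (f 0).val < 14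
  · left
    have hsub : ∀ w : Fin 14, (f w).val < 14 := fun w => (hside w).mp hc
    have himg : Finset.image (f : Fin 14 → Fin 30) Finset.univ ⊆
        Finset.univ.filter (fun v : Fin 30 => v.val < 14) := by
      intro x hx
      simp only [Finset.mem_image, Finset.mem_univ, true_and] at hx
      obtain ⟨w, rfl⟩ := hx
      simp only [Finset.mem_filter, Finset.mem_univ, true_and]
      exact hsub w
    have hcard1 : (Finset.image (f : Fin 14 → Fin 30) Finset.univ).card = 14 := by
      rw [Finset.card_image_of_injective _ hinj, Finset.card_univ, Fintype.card_fin]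
    have hcard2 : (Finset.univ.filter (fun v : Fin 30 => v.val < 14)).card = 14 := by decide
    have heq : Finset.image (f : Fin 14 → Fin 30) Finset.univ =
        Finset.univ.filter (fun v : Fin 30 => v.val < 14) :=
      Finset.eq_of_subset_of_card_le himg (by rw [hcard1, hcard2])
    ext x
    simp only [Set.mem_range, Set.mem_setOf_eq]
    constructor
    · rintro ⟨w, rfl⟩; exact hsub w
    · intro hx
      have hx' : x ∈ Finset.univ.filter (fun v : Fin 30 => v.val < 14) := by
        simp only [Finset.mem_filter, Finset.mem_univ, true_and]; exact hx
      rw [← heq] at hx'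
      simp only [Finset.mem_image, Finset.mem_univ, true_and] at hx'
      exact hx'
  · right
    have hsub : ∀ w : Fin 14, 14 ≤ (f w).val ∧ (f w).val < 28 := by
      intro w
      have h1 : ¬ (f w).val < 14 := fun h => hc ((hside w).mpr h)
      have h2 := (f w).isLt
      have h3 := hval28 w
      have h4 := hval29 w
      omega
    have himg : Finset.image (f : Fin 14 → Fin 30) Finset.univ ⊆
        Finset.univ.filter (fun v : Fin 30 => 14 ≤ v.val ∧ v.val < 28) := by
      intro x hx
      simp only [Finset.mem_image, Finset.mem_univ, true_and] at hx
      obtain ⟨w, rfl⟩ := hx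
      simp only [Finset.mem_filter, Finset.mem_univ, true_and]
      exact hsub w
    have hcard1 : (Finset.image (f : Fin 14 → Fin 30) Finset.univ).card = 14 := by
      rw [Finset.card_image_of_injective _ hinj, Finset.card_univ, Fintype.card_fin]
    have hcard2 : (Finset.univ.filter (fun v : Fin 30 => 14 ≤ v.val ∧ v.val < 28)).card = 14 := by
      decide
    have heq : Finset.image (f : Fin 14 → Fin 30) Finset.univ =
        Finset.univ.filter (fun v : Fin 30 => 14 ≤ v.val ∧ v.val < 28) :=
      Finset.eq_of_subset_of_card_le himg (by rw [hcard1, hcard2])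
    ext x
    simp only [Set.mem_range, Set.mem_setOf_eq]
    constructor
    · rintro ⟨w, rfl⟩; exact hsub w
    · intro hx
      have hx' : x ∈ Finset.univ.filter (fun v : Fin 30 => 14 ≤ v.val ∧ v.val < 28) := by
        simp only [Finset.mem_filter, Finset.mem_univ, true_and]; exact hx
      rw [← heq] at hx'
      simp only [Finset.mem_image, Finset.mem_univ, true_and] at hx'
      exact hx'
end

section
/- Let n = 2m+1 with m ≥ 2, and let A be the odd-case configuration (seven a-chains of length n−2, four b-chains of length n−3, and one c-chain of length n−4 connected as specified). Then A is confined: every element has valency ≥ 2 and every chain of n−2 consecutive elements contains an element of valency ≥ 3. -/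
/-- The vertex set of the odd-case configuration `A` (for `n = 2m + 1`, `m ≥ 2`):
seven `a`-chains `a_k^1, ..., a_k^{n-2}` (`1 ≤ k ≤ 7`), four `b`-chains
`b_k^1, ..., b_k^{n-3}` (`1 ≤ k ≤ 4`), and one `c`-chain `c_1, ..., c_{n-4}`.
Indices are shifted down by one, so `a_k^i` is `Sum.inl (k - 1, i - 1)`, etc. -/
abbrev OddConfigV (n : ℕ) : Type :=
  (Fin 7 × Fin (n - 2)) ⊕ ((Fin 4 × Fin (n - 3)) ⊕ Fin (n - 4))

/-- The base incidences of the odd-case configuration: along each chain; the joins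
`a_k^{n-2} | a_{k+1}^1` (`1 ≤ k ≤ 6`); the incidences `a_k^1 | b_k^1` (`1 ≤ k ≤ 4`) and
`a_{k+3}^{n-2} | b_k^{n-3}` (`1 ≤ k ≤ 4`); and `a_1^1 | c_1`, `a_7^{n-2} | c_{n-4}`. -/
def oddConfigRel (n : ℕ) : OddConfigV n → OddConfigV n → Prop
  | .inl (k, i), .inl (k', i') =>
      (k = k' ∧ i'.val = i.val + 1) ∨ (k'.val = k.val + 1 ∧ i.val = n - 3 ∧ i'.val = 0)
  | .inl (k, i), .inr (.inl (k', i')) =>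
      (k.val = k'.val ∧ i.val = 0 ∧ i'.val = 0) ∨
      (k.val = k'.val + 3 ∧ i.val = n - 3 ∧ i'.val = n - 4)
  | .inl (k, i), .inr (.inr j) =>
      (k.val = 0 ∧ i.val = 0 ∧ j.val = 0) ∨ (k.val = 6 ∧ i.val = n - 3 ∧ j.val = n - 5)
  | .inr (.inl (k, i)), .inr (.inl (k', i')) => k = k' ∧ i'.val = i.val + 1
  | .inr (.inr j), .inr (.inr j') => j'.val = j.val + 1
  | _, _ => False

/-- The odd-case configuration `A` of Construction 3.4, as a simple graph. -/
def oddConfig (n : ℕ) : SimpleGraph (OddConfigV n) :=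
  SimpleGraph.fromRel (oddConfigRel n)

/-! ### Auxiliary definitions -/

/-- The vertices of valency 3 ("big" vertices): `a_k^1` for `1 ≤ k ≤ 4` and
`a_k^{n-2}` for `4 ≤ k ≤ 7` (in shifted indices, `k ≤ 3` resp. `3 ≤ k`). -/
def OddIsBig (n : ℕ) : OddConfigV n → Prop
  | .inl (k, i) => (k.val ≤ 3 ∧ i.val = 0) ∨ (3 ≤ k.val ∧ i.val = n - 3)
  | .inr _ => False

/-- A layout of the non-big vertices: each maximal chain of degree-2 vertices is
placed inside its own block of length `n - 2`, occupying positions `0, ..., n-4`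
of the block, so position `n - 3` of every block is never used. -/
def oddPos (n : ℕ) : OddConfigV n → ℕ
  | .inl (k, i) =>
      if k.val ≤ 3 then k.val * (n - 2) + (i.val - 1) else k.val * (n - 2) + i.val
  | .inr (.inl (k, i)) => (7 + k.val) * (n - 2) + i.val
  | .inr (.inr j) => 11 * (n - 2) + j.val

lemma odd_block_eq {B K1 K2 r1 r2 : ℕ} (h1 : r1 < B) (h2 : r2 < B)
    (h : K1 * B + r1 = K2 * B + r2) : K1 = K2 ∧ r1 = r2 := by
  have hK : K1 = K2 := by
    rcases Nat.lt_trichotomy K1 K2 with hlt | he | hgt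
    · have h3 : (K1 + 1) * B ≤ K2 * B := Nat.mul_le_mul_right B hlt
      rw [add_mul, one_mul] at h3; omega
    · exact he
    · have h3 : (K2 + 1) * B ≤ K1 * B := Nat.mul_le_mul_right B hgt
      rw [add_mul, one_mul] at h3; omega
  subst hK; omega

lemma odd_ncard_two {α : Type*} [Finite α] {s : Set α} {a b : α}
    (ha : a ∈ s) (hb : b ∈ s) (hab : a ≠ b) : 2 ≤ s.ncard :=
  (Set.one_lt_ncard (Set.toFinite s)).2 ⟨a, ha, b, hb, hab⟩

lemma odd_ncard_three {α : Type*} [Finite α] {s : Set α} {a b c : α}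
    (ha : a ∈ s) (hb : b ∈ s) (hc : c ∈ s)
    (hab : a ≠ b) (hac : a ≠ c) (hbc : b ≠ c) : 3 ≤ s.ncard := by
  have hsub : ({a, b, c} : Set α) ⊆ s := by
    intro x hx
    rcases hx with rfl | rfl | rfl <;> assumption
  have h3 : ({a, b, c} : Set α).ncard = 3 := by
    rw [Set.ncard_insert_of_notMem (by simp [hab, hac]),
      Set.ncard_pair hbc]
  calc 3 = ({a, b, c} : Set α).ncard := h3.symm
    _ ≤ s.ncard := Set.ncard_le_ncard hsub (Set.toFinite s)

lemma odd_mem_nbr {n : ℕ} (v w : OddConfigV n) (h1 : v ≠ w)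
    (h2 : oddConfigRel n v w ∨ oddConfigRel n w v) :
    w ∈ (oddConfig n).neighborSet v :=
  (SimpleGraph.fromRel_adj _ v w).2 ⟨h1, h2⟩

/-- Every big vertex has at least three neighbours. -/
lemma odd_big_deg {n : ℕ} (h5 : 5 ≤ n) {v : OddConfigV n} (hb : OddIsBig n v) :
    3 ≤ ((oddConfig n).neighborSet v).ncard := by
  rcases v with ⟨k, i⟩ | (⟨k, i⟩ | j)
  · rcases hb with ⟨hk, hi⟩ | ⟨hk, hi⟩
    · -- i = 0, k ≤ 3
      by_cases hk0 : k.val = 0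
      · exact odd_ncard_three
          (odd_mem_nbr _ (Sum.inl (k, ⟨1, by omega⟩))
            (by simp [Fin.ext_iff] <;> omega)
            (by left; simp [oddConfigRel, Fin.ext_iff] <;> omega))
          (odd_mem_nbr _ (Sum.inr (Sum.inl (⟨k.val, by omega⟩, ⟨0, by omega⟩)))
            (by simp)
            (by left; simp [oddConfigRel, Fin.ext_iff] <;> omega))
          (odd_mem_nbr _ (Sum.inr (Sum.inr ⟨0, by omega⟩))
            (by simp)
            (by left; simp only [oddConfigRel, and_true, true_and] <;> omega))
          (by simp) (by simp) (by simp)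
      · exact odd_ncard_three
          (odd_mem_nbr _ (Sum.inl (k, ⟨1, by omega⟩))
            (by simp [Fin.ext_iff] <;> omega)
            (by left; simp [oddConfigRel, Fin.ext_iff] <;> omega))
          (odd_mem_nbr _ (Sum.inr (Sum.inl (⟨k.val, by omega⟩, ⟨0, by omega⟩)))
            (by simp)
            (by left; simp [oddConfigRel, Fin.ext_iff] <;> omega))
          (odd_mem_nbr _ (Sum.inl (⟨k.val - 1, by omega⟩, ⟨n - 3, by omega⟩))
            (by simp [Fin.ext_iff] <;> omega)
            (by right; simp [oddConfigRel, Fin.ext_iff] <;> omega))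
          (by simp) (by simp [Fin.ext_iff] <;> omega) (by simp)
    · -- i = n - 3, 3 ≤ k
      by_cases hk6 : k.val = 6
      · exact odd_ncard_three
          (odd_mem_nbr _ (Sum.inl (k, ⟨n - 4, by omega⟩))
            (by simp [Fin.ext_iff] <;> omega)
            (by right; left; simp [Fin.ext_iff] <;> omega))
          (odd_mem_nbr _ (Sum.inr (Sum.inl (⟨k.val - 3, by omega⟩, ⟨n - 4, by omega⟩)))
            (by simp)
            (by left; simp [oddConfigRel, Fin.ext_iff] <;> omega))
          (odd_mem_nbr _ (Sum.inr (Sum.inr ⟨n - 5, by omega⟩))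
            (by simp)
            (by left; simp only [oddConfigRel, and_true, true_and] <;> omega))
          (by simp) (by simp) (by simp)
      · exact odd_ncard_three
          (odd_mem_nbr _ (Sum.inl (k, ⟨n - 4, by omega⟩))
            (by simp [Fin.ext_iff] <;> omega)
            (by right; left; simp [Fin.ext_iff] <;> omega))
          (odd_mem_nbr _ (Sum.inr (Sum.inl (⟨k.val - 3, by omega⟩, ⟨n - 4, by omega⟩)))
            (by simp)
            (by left; simp [oddConfigRel, Fin.ext_iff] <;> omega))
          (odd_mem_nbr _ (Sum.inl (⟨k.val + 1, by omega⟩, ⟨0, by omega⟩))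
            (by simp [Fin.ext_iff] <;> omega)
            (by left; simp [oddConfigRel, Fin.ext_iff] <;> omega))
          (by simp) (by simp [Fin.ext_iff] <;> omega) (by simp)
  · exact absurd hb (by simp [OddIsBig])
  · exact absurd hb (by simp [OddIsBig])

/-- Every vertex has at least two neighbours. -/
lemma odd_deg_two {n : ℕ} (h5 : 5 ≤ n) (v : OddConfigV n) :
    2 ≤ ((oddConfig n).neighborSet v).ncard := by
  rcases v with ⟨k, i⟩ | (⟨k, i⟩ | j)
  · have hi2 := i.2
    by_cases h0 : i.val = 0
    · by_cases hk0 : k.val = 0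
      · exact odd_ncard_two
          (odd_mem_nbr _ (Sum.inl (k, ⟨1, by omega⟩))
            (by simp [Fin.ext_iff] <;> omega)
            (by left; simp [oddConfigRel, Fin.ext_iff] <;> omega))
          (odd_mem_nbr _ (Sum.inr (Sum.inr ⟨0, by omega⟩))
            (by simp)
            (by left; simp only [oddConfigRel, and_true, true_and] <;> omega))
          (by simp)
      · exact odd_ncard_two
          (odd_mem_nbr _ (Sum.inl (k, ⟨1, by omega⟩))
            (by simp [Fin.ext_iff] <;> omega)
            (by left; simp [oddConfigRel, Fin.ext_iff] <;> omega))
          (odd_mem_nbr _ (Sum.inl (⟨k.val - 1, by omega⟩, ⟨n - 3, by omega⟩))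
            (by simp [Fin.ext_iff] <;> omega)
            (by right; simp [oddConfigRel, Fin.ext_iff] <;> omega))
          (by simp [Fin.ext_iff] <;> omega)
    · by_cases hl : i.val = n - 3
      · by_cases hk6 : k.val = 6
        · exact odd_ncard_two
            (odd_mem_nbr _ (Sum.inl (k, ⟨n - 4, by omega⟩))
              (by simp [Fin.ext_iff] <;> omega)
              (by right; left; simp [Fin.ext_iff] <;> omega))
            (odd_mem_nbr _ (Sum.inr (Sum.inr ⟨n - 5, by omega⟩))
              (by simp)
              (by left; simp only [oddConfigRel, and_true, true_and] <;> omega))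
            (by simp)
        · exact odd_ncard_two
            (odd_mem_nbr _ (Sum.inl (k, ⟨n - 4, by omega⟩))
              (by simp [Fin.ext_iff] <;> omega)
              (by right; left; simp [Fin.ext_iff] <;> omega))
            (odd_mem_nbr _ (Sum.inl (⟨k.val + 1, by omega⟩, ⟨0, by omega⟩))
              (by simp [Fin.ext_iff] <;> omega)
              (by left; simp [oddConfigRel, Fin.ext_iff] <;> omega))
            (by simp [Fin.ext_iff] <;> omega)
      · exact odd_ncard_two
          (odd_mem_nbr _ (Sum.inl (k, ⟨i.val - 1, by omega⟩))
            (by simp [Fin.ext_iff] <;> omega)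
            (by right; left; simp [Fin.ext_iff] <;> omega))
          (odd_mem_nbr _ (Sum.inl (k, ⟨i.val + 1, by omega⟩))
            (by simp [Fin.ext_iff] <;> omega)
            (by left; left; simp [Fin.ext_iff] <;> omega))
          (by simp [Fin.ext_iff] <;> omega)
  · have hi2 := i.2
    have hk2 := k.2
    by_cases h0 : i.val = 0
    · exact odd_ncard_two
        (odd_mem_nbr _ (Sum.inl (⟨k.val, by omega⟩, ⟨0, by omega⟩))
          (by simp)
          (by right; left; simp [Fin.ext_iff] <;> omega))
        (odd_mem_nbr _ (Sum.inr (Sum.inl (k, ⟨1, by omega⟩)))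
          (by simp [Fin.ext_iff] <;> omega)
          (by left; simp [oddConfigRel, Fin.ext_iff] <;> omega))
        (by simp)
    · by_cases hl : i.val = n - 4
      · exact odd_ncard_two
          (odd_mem_nbr _ (Sum.inr (Sum.inl (k, ⟨i.val - 1, by omega⟩)))
            (by simp [Fin.ext_iff] <;> omega)
            (by right; simp [oddConfigRel, Fin.ext_iff] <;> omega))
          (odd_mem_nbr _ (Sum.inl (⟨k.val + 3, by omega⟩, ⟨n - 3, by omega⟩))
            (by simp)
            (by right; right; simp [Fin.ext_iff] <;> omega))
          (by simp)
      · exact odd_ncard_two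
          (odd_mem_nbr _ (Sum.inr (Sum.inl (k, ⟨i.val - 1, by omega⟩)))
            (by simp [Fin.ext_iff] <;> omega)
            (by right; simp [oddConfigRel, Fin.ext_iff] <;> omega))
          (odd_mem_nbr _ (Sum.inr (Sum.inl (k, ⟨i.val + 1, by omega⟩)))
            (by simp [Fin.ext_iff] <;> omega)
            (by left; simp [oddConfigRel, Fin.ext_iff] <;> omega))
          (by simp [Fin.ext_iff] <;> omega)
  · have hj2 := j.2
    by_cases h0 : j.val = 0
    · by_cases hl : j.val = n - 5
      · exact odd_ncard_two
          (odd_mem_nbr _ (Sum.inl (⟨0, by omega⟩, ⟨0, by omega⟩))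
            (by simp)
            (by right; left; simp [Fin.ext_iff] <;> omega))
          (odd_mem_nbr _ (Sum.inl (⟨6, by omega⟩, ⟨n - 3, by omega⟩))
            (by simp)
            (by right; right; simp [Fin.ext_iff] <;> omega))
          (by simp [Fin.ext_iff] <;> omega)
      · exact odd_ncard_two
          (odd_mem_nbr _ (Sum.inl (⟨0, by omega⟩, ⟨0, by omega⟩))
            (by simp)
            (by right; left; simp [Fin.ext_iff] <;> omega))
          (odd_mem_nbr _ (Sum.inr (Sum.inr ⟨1, by omega⟩))
            (by simp [Fin.ext_iff] <;> omega)
            (by left; simp [oddConfigRel, Fin.ext_iff] <;> omega))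
          (by simp)
    · by_cases hl : j.val = n - 5
      · exact odd_ncard_two
          (odd_mem_nbr _ (Sum.inr (Sum.inr ⟨j.val - 1, by omega⟩))
            (by simp [Fin.ext_iff] <;> omega)
            (by right; simp [oddConfigRel, Fin.ext_iff] <;> omega))
          (odd_mem_nbr _ (Sum.inl (⟨6, by omega⟩, ⟨n - 3, by omega⟩))
            (by simp)
            (by right; right; simp [Fin.ext_iff] <;> omega))
          (by simp)
      · exact odd_ncard_two
          (odd_mem_nbr _ (Sum.inr (Sum.inr ⟨j.val - 1, by omega⟩))
            (by simp [Fin.ext_iff] <;> omega)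
            (by right; simp [oddConfigRel, Fin.ext_iff] <;> omega))
          (odd_mem_nbr _ (Sum.inr (Sum.inr ⟨j.val + 1, by omega⟩))
            (by simp [Fin.ext_iff] <;> omega)
            (by left; simp [oddConfigRel, Fin.ext_iff] <;> omega))
          (by simp [Fin.ext_iff] <;> omega)

/-- Adjacent non-big vertices have positions differing by exactly one. -/
lemma odd_step_rel {n : ℕ} (h5 : 5 ≤ n) {u v : OddConfigV n}
    (hu : ¬ OddIsBig n u) (hv : ¬ OddIsBig n v) (h : oddConfigRel n u v) :
    oddPos n v = oddPos n u + 1 ∨ oddPos n u = oddPos n v + 1 := by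
  rcases u with ⟨k, i⟩ | (⟨k, i⟩ | j) <;> rcases v with ⟨k', i'⟩ | (⟨k', i'⟩ | j')
  · simp only [oddConfigRel] at h
    simp only [OddIsBig] at hu hv
    rcases h with ⟨hk, hi⟩ | ⟨hk, hi, hi'⟩
    · subst hk
      simp only [oddPos]
      split_ifs with h1
      · left; omega
      · left; omega
    · exfalso
      have hk2' := k'.2
      omega
  · exfalso
    simp only [oddConfigRel] at h
    simp only [OddIsBig] at hu
    have hk2' := k'.2
    omega
  · exfalso
    simp only [oddConfigRel] at h
    simp only [OddIsBig] at hu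
    omega
  · exact absurd h (by simp [oddConfigRel])
  · simp only [oddConfigRel] at h
    obtain ⟨hk, hi⟩ := h
    subst hk
    simp only [oddPos]
    left; omega
  · exact absurd h (by simp [oddConfigRel])
  · exact absurd h (by simp [oddConfigRel])
  · exact absurd h (by simp [oddConfigRel])
  · simp only [oddConfigRel] at h
    simp only [oddPos]
    left; omega

/-- The position map is injective on non-big vertices. -/
lemma odd_pos_inj {n : ℕ} (h5 : 5 ≤ n) {u v : OddConfigV n}
    (hu : ¬ OddIsBig n u) (hv : ¬ OddIsBig n v) (h : oddPos n u = oddPos n v) :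
    u = v := by
  rcases u with ⟨k, i⟩ | (⟨k, i⟩ | j) <;> rcases v with ⟨k', i'⟩ | (⟨k', i'⟩ | j')
  · simp only [OddIsBig] at hu hv
    simp only [oddPos] at h
    have hi2 := i.2; have hi2' := i'.2
    split_ifs at h <;>
      obtain ⟨hK, hr⟩ := odd_block_eq (by omega) (by omega) h <;>
      · simp only [Sum.inl.injEq, Prod.mk.injEq, Fin.ext_iff]
        omega
  · exfalso
    simp only [oddPos] at h
    have hi2 := i.2; have hi2' := i'.2; have hk2 := k.2
    split_ifs at h <;>
      · obtain ⟨hK, hr⟩ := odd_block_eq (by omega) (by omega) h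
        omega
  · exfalso
    simp only [oddPos] at h
    have hi2 := i.2; have hj2' := j'.2; have hk2 := k.2
    split_ifs at h <;>
      · obtain ⟨hK, hr⟩ := odd_block_eq (by omega) (by omega) h
        omega
  · exfalso
    simp only [oddPos] at h
    have hi2 := i.2; have hi2' := i'.2; have hk2' := k'.2
    split_ifs at h <;>
      · obtain ⟨hK, hr⟩ := odd_block_eq (by omega) (by omega) h
        omega
  · simp only [oddPos] at h
    have hi2 := i.2; have hi2' := i'.2
    obtain ⟨hK, hr⟩ := odd_block_eq (by omega) (by omega) h
    simp only [Sum.inr.injEq, Sum.inl.injEq, Prod.mk.injEq, Fin.ext_iff]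
    omega
  · exfalso
    simp only [oddPos] at h
    have hi2 := i.2; have hj2' := j'.2; have hk2 := k.2
    obtain ⟨hK, hr⟩ := odd_block_eq (by omega) (by omega) h
    omega
  · exfalso
    simp only [oddPos] at h
    have hj2 := j.2; have hi2' := i'.2; have hk2' := k'.2
    split_ifs at h <;>
      · obtain ⟨hK, hr⟩ := odd_block_eq (by omega) (by omega) h
        omega
  · exfalso
    simp only [oddPos] at h
    have hj2 := j.2; have hi2' := i'.2; have hk2' := k'.2
    obtain ⟨hK, hr⟩ := odd_block_eq (by omega) (by omega) h
    omega
  · simp only [oddPos] at h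
    have hj2 := j.2; have hj2' := j'.2
    obtain ⟨hK, hr⟩ := odd_block_eq (by omega) (by omega) h
    simp only [Sum.inr.injEq, Fin.ext_iff]
    omega

/-- The position of a non-big vertex never has residue `n - 3` modulo `n - 2`. -/
lemma odd_pos_mod {n : ℕ} (h5 : 5 ≤ n) {v : OddConfigV n} (hv : ¬ OddIsBig n v) :
    oddPos n v % (n - 2) ≠ n - 3 := by
  have hB : 0 < n - 2 := by omega
  rcases v with ⟨k, i⟩ | (⟨k, i⟩ | j)
  · simp only [OddIsBig] at hv
    simp only [oddPos]
    have hi2 := i.2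
    split_ifs with h1
    · rw [Nat.mul_add_mod_of_lt (by omega)]; omega
    · rw [Nat.mul_add_mod_of_lt (by omega)]; omega
  · simp only [oddPos]
    have hi2 := i.2
    rw [Nat.mul_add_mod_of_lt (by omega)]; omega
  · simp only [oddPos]
    have hj2 := j.2
    rw [Nat.mul_add_mod_of_lt (by omega)]; omega

/-- A nodup `±1`-chain of naturals is monotone (up or down). -/
lemma odd_pm_mono (q : List ℕ) (hnd : q.Nodup)
    (hc : q.Chain' (fun a b => b = a + 1 ∨ a = b + 1)) :
    q.Chain' (fun a b => b = a + 1) ∨ q.Chain' (fun a b => a = b + 1) := by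
  induction q with
  | nil => left; exact List.isChain_nil
  | cons a t ih =>
    cases t with
    | nil => left; exact List.isChain_singleton _
    | cons b s =>
      obtain ⟨hab, ht⟩ := List.isChain_cons_cons.1 hc
      rcases ih hnd.of_cons ht with hup | hdown
      · rcases hab with h1 | h2
        · left; exact List.isChain_cons_cons.2 ⟨h1, hup⟩
        · cases s with
          | nil => right; exact List.isChain_cons_cons.2 ⟨h2, by simp⟩
          | cons c s' =>
            obtain ⟨hbc, _⟩ := List.isChain_cons_cons.1 hup
            exfalso
            have hmem : a ∈ b :: c :: s' := by
              rw [show a = c by omega]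
              exact List.mem_cons_of_mem _ List.mem_cons_self
            exact (List.nodup_cons.1 hnd).1 hmem
      · rcases hab with h1 | h2
        · cases s with
          | nil => left; exact List.isChain_cons_cons.2 ⟨h1, by simp⟩
          | cons c s' =>
            obtain ⟨hbc, _⟩ := List.isChain_cons_cons.1 hdown
            exfalso
            have hmem : a ∈ b :: c :: s' := by
              rw [show a = c by omega]
              exact List.mem_cons_of_mem _ List.mem_cons_self
            exact (List.nodup_cons.1 hnd).1 hmem
        · right; exact List.isChain_cons_cons.2 ⟨h2, hdown⟩

/-- In an ascending chain, all values `headI + d` occur. -/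
lemma odd_up_run (q : List ℕ) (hc : q.Chain' (fun a b => b = a + 1)) :
    ∀ d < q.length, (q.headI + d) ∈ q := by
  induction q with
  | nil => simp
  | cons a t ih =>
    intro d hd
    cases t with
    | nil =>
      simp only [List.length_singleton] at hd
      interval_cases d
      simp
    | cons b s =>
      obtain ⟨hab, ht⟩ := List.isChain_cons_cons.1 hc
      cases d with
      | zero => simp
      | succ d' =>
        have hm := ih ht d' (by simp at hd ⊢; omega)
        have : (a :: b :: s).headI + (d' + 1) = (b :: s).headI + d' := by
          simp [List.headI]; omega
        rw [this]
        exact List.mem_cons_of_mem _ hm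

/-- A nodup `±1`-chain of length `L` realises `L` consecutive values. -/
lemma odd_run (q : List ℕ) (hnd : q.Nodup)
    (hc : q.Chain' (fun a b => b = a + 1 ∨ a = b + 1)) :
    ∃ t, ∀ d < q.length, (t + d) ∈ q := by
  rcases odd_pm_mono q hnd hc with hup | hdown
  · exact ⟨q.headI, odd_up_run q hup⟩
  · have hrev : q.reverse.Chain' (fun a b => b = a + 1) := by
      show q.reverse.IsChain _
      rw [List.isChain_reverse]
      exact hdown.imp fun a b h => h
    refine ⟨q.reverse.headI, fun d hd => ?_⟩
    have := odd_up_run q.reverse hrev d (by simpa using hd)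
    exact List.mem_reverse.1 this

/-- for `n = 2m + 1` with `m ≥ 2`, the odd-case configuration `A` is
confined: every element has valency ≥ 2, and every chain of `n - 2` (distinct,
consecutively incident) elements contains an element of valency ≥ 3. -/
theorem oddConfig_confined (n m : ℕ) (hm : 2 ≤ m) (hn : n = 2 * m + 1) :
    (∀ v : OddConfigV n, 2 ≤ ((oddConfig n).neighborSet v).ncard) ∧
    (∀ l : List (OddConfigV n), l.length = n - 2 → l.Nodup → l.Chain' (oddConfig n).Adj →
      ∃ x ∈ l, 3 ≤ ((oddConfig n).neighborSet x).ncard) := by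
  have h5 : 5 ≤ n := by omega
  refine ⟨odd_deg_two h5, ?_⟩
  intro l hlen hnd hch
  by_contra hcon
  push_neg at hcon
  have hplain : ∀ x ∈ l, ¬ OddIsBig n x := by
    intro x hx hb
    exact absurd (odd_big_deg h5 hb) (by exact Nat.not_le.2 (hcon x hx))
  -- the list of positions
  set q : List ℕ := l.map (oddPos n) with hq
  have hqlen : q.length = n - 2 := by simp [hq, hlen]
  have hqnd : q.Nodup := by
    refine List.Nodup.map_on ?_ hnd
    intro x hx y hy hxy
    exact odd_pos_inj h5 (hplain x hx) (hplain y hy) hxy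
  have hqch : q.Chain' (fun a b => b = a + 1 ∨ a = b + 1) := by
    show q.IsChain _
    rw [List.isChain_iff_getElem]
    intro idx hidx
    have hlq : q.length = l.length := by simp [hq]
    have h1 : q[idx] = oddPos n l[idx] := by
      simp [hq]
    have h2 : q[idx + 1] = oddPos n l[idx + 1] := by
      simp [hq]
    rw [h1, h2]
    have hadj := List.isChain_iff_getElem.1 hch idx (by omega)
    have hx := List.getElem_mem (l := l) (n := idx) (by omega)
    have hy := List.getElem_mem (l := l) (n := idx + 1) (by omega)
    rcases (SimpleGraph.fromRel_adj _ _ _).1 hadj with ⟨_, hrel | hrel⟩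
    · exact odd_step_rel h5 (hplain _ hx) (hplain _ hy) hrel
    · exact (odd_step_rel h5 (hplain _ hy) (hplain _ hx) hrel).symm
  obtain ⟨t, hrun⟩ := odd_run q hqnd hqch
  -- find the forbidden residue in the run
  have hB : 0 < n - 2 := by omega
  have hrlt : t % (n - 2) < n - 2 := Nat.mod_lt t hB
  set d : ℕ := n - 3 - t % (n - 2) with hd
  have hdlt : d < n - 2 := by omega
  have hmem := hrun d (by omega)
  have hmod : (t + d) % (n - 2) = n - 3 := by
    have h1 : t = (n - 2) * (t / (n - 2)) + t % (n - 2) := (Nat.div_add_mod t (n - 2)).symm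
    have h2 : t + d = (t / (n - 2)) * (n - 2) + (t % (n - 2) + d) := by
      rw [Nat.mul_comm]; omega
    rw [h2, Nat.mul_add_mod_of_lt (by omega)]; omega
  rw [hq, List.mem_map] at hmem
  obtain ⟨x, hxl, hxpos⟩ := hmem
  exact odd_pos_mod h5 (hplain x hxl) (hxpos ▸ hmod)
end

section
/- Let A be a graph in which every two vertices lie on a common cycle, and let B be obtained from the disjoint union of two copies A_1, A_2 of A by adding a connecting path whose internal vertices all have valency 2 in B. Then the image of any graph embedding of A into B is contained entirely in A_1 or entirely in A_2. -/
/-- The graph `G` is obtained from the disjoint (vertex) sets `S₁` and `S₂` by adding a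
new path `d 0, ..., d (k-1)` of distinct vertices, where `d 0` is adjacent (exactly) to
the vertex `u` of `S₁` and to `d 1`, `d (k-1)` is adjacent (exactly) to `d (k-2)` and to
the vertex `w` of `S₂`, each internal `d i` is adjacent exactly to `d (i-1)` and
`d (i+1)`, and there are no edges between `S₁` and `S₂`. -/
structure BridgeSetup {V : Type} (G : SimpleGraph V) (S₁ S₂ : Set V)
    (k : ℕ) (d : ℕ → V) (u w : V) : Prop where
  one_le_k : 1 ≤ k
  disjoint : Disjoint S₁ S₂
  d_not_in : ∀ i < k, d i ∉ S₁ ∪ S₂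
  d_inj : ∀ i < k, ∀ j < k, d i = d j → i = j
  cover : ∀ v : V, v ∈ S₁ ∨ v ∈ S₂ ∨ ∃ i < k, v = d i
  u_mem : u ∈ S₁
  w_mem : w ∈ S₂
  no_cross : ∀ x ∈ S₁, ∀ y ∈ S₂, ¬ G.Adj x y
  d_neighbors : ∀ i < k, G.neighborSet (d i) =
    {if i = 0 then u else d (i - 1), if i = k - 1 then w else d (i + 1)}

open SimpleGraph

namespace BridgeAux

variable {V : Type} {G : SimpleGraph V} {S₁ S₂ : Set V} {k : ℕ} {d : ℕ → V} {u w : V}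

/-- The "inside" of the `m`-th cut. -/
def cut (S₁ : Set V) (d : ℕ → V) (m : ℕ) : Set V := S₁ ∪ {v | ∃ j < m, v = d j}

lemma d_mem_cut {m j : ℕ} (hj : j < m) : d j ∈ cut S₁ d m := Or.inr ⟨j, hj, rfl⟩

lemma s1_mem_cut {m : ℕ} {a : V} (ha : a ∈ S₁) : a ∈ cut S₁ d m := Or.inl ha

lemma d_not_mem_cut (hb : BridgeSetup G S₁ S₂ k d u w) {i m : ℕ} (hi : i < k)
    (hm : m ≤ i) : d i ∉ cut S₁ d m := by
  rintro (h | ⟨j, hj, he⟩)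
  · exact hb.d_not_in i hi (Or.inl h)
  · have : i = j := hb.d_inj i hi j (by omega) he
    omega

lemma w_not_mem_cut (hb : BridgeSetup G S₁ S₂ k d u w) {m : ℕ} (hm : m ≤ k) :
    w ∉ cut S₁ d m := by
  rintro (h | ⟨j, hj, he⟩)
  · exact hb.disjoint.ne_of_mem h hb.w_mem rfl
  · exact hb.d_not_in j (by omega) (Or.inr (he ▸ hb.w_mem))

lemma s2_not_mem_cut (hb : BridgeSetup G S₁ S₂ k d u w) {m : ℕ} (hm : m ≤ k) {a : V}
    (ha : a ∈ S₂) : a ∉ cut S₁ d m := by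
  rintro (h | ⟨j, hj, he⟩)
  · exact hb.disjoint.ne_of_mem h ha rfl
  · exact hb.d_not_in j (by omega) (Or.inr (he ▸ ha))

/-- Crossing the `m`-th cut happens only along the `m`-th bridge edge. -/
lemma front (hb : BridgeSetup G S₁ S₂ k d u w) {m : ℕ} (hm : m ≤ k) {a b : V}
    (ha : a ∈ cut S₁ d m) (hnb : b ∉ cut S₁ d m) (hadj : G.Adj a b) :
    a = (if m = 0 then u else d (m - 1)) ∧ b = (if m = k then w else d m) := by
  rcases ha with ha | ⟨j, hj, rfl⟩
  · -- a ∈ S₁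
    have hb1 : b ∉ S₁ := fun h => hnb (Or.inl h)
    have hb2 : b ∉ S₂ := fun h => hb.no_cross a ha b h hadj
    obtain ⟨j, hjk, rfl⟩ : ∃ j < k, b = d j := by
      rcases hb.cover b with h | h | h
      · exact absurd h hb1
      · exact absurd h hb2
      · exact h
    have hmem : a ∈ G.neighborSet (d j) := hadj.symm
    rw [hb.d_neighbors j hjk] at hmem
    have hj0 : j = 0 ∧ a = u := by
      rcases hmem with h | h
      · split at h
        · exact ⟨by assumption, h⟩
        · exact absurd (h ▸ ha) (fun hh => hb.d_not_in (j-1) (by omega) (Or.inl hh))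
      · rw [Set.mem_singleton_iff] at h
        split at h
        · exact absurd (h ▸ ha) (fun hh => hb.disjoint.ne_of_mem hh hb.w_mem rfl)
        · exact absurd (h ▸ ha) (fun hh => hb.d_not_in (j+1) (by omega) (Or.inl hh))
    obtain ⟨rfl, rfl⟩ := hj0
    have hm0 : m = 0 := by
      by_contra h
      exact hnb (d_mem_cut (by omega))
    subst hm0
    refine ⟨by simp, ?_⟩
    rw [if_neg (by omega)]
  · -- a = d j, j < m
    have hjk : j < k := by omega
    have hmem : b ∈ G.neighborSet (d j) := hadj
    rw [hb.d_neighbors j hjk] at hmem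
    rcases hmem with h | h
    · exfalso
      split at h
      · exact hnb (h ▸ s1_mem_cut hb.u_mem)
      · exact hnb (h ▸ d_mem_cut (by omega))
    · rw [Set.mem_singleton_iff] at h
      by_cases hjk1 : j = k - 1
      · rw [if_pos hjk1] at h
        have hmk : m = k := by omega
        subst hmk
        constructor
        · rw [if_neg (by omega)]
          exact congrArg d hjk1
        · rw [if_pos rfl]
          exact h
      · rw [if_neg hjk1] at h
        have hj1 : j + 1 < k := by omega
        have hmj : m = j + 1 := by
          by_contra hne
          exact hnb (h ▸ d_mem_cut (show j + 1 < m by omega))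
        subst hmj
        constructor
        · rw [if_neg (by omega), Nat.add_sub_cancel]
        · rw [if_neg (by omega)]
          exact h

/-- A walk from inside the `m`-th cut to outside it contains the bridge edge. -/
lemma conf_edge (hb : BridgeSetup G S₁ S₂ k d u w) {m : ℕ} (hm : m ≤ k) :
    ∀ {a b : V} (p : G.Walk a b), a ∈ cut S₁ d m → b ∉ cut S₁ d m →
      s((if m = 0 then u else d (m - 1)), (if m = k then w else d m)) ∈ p.edges := by
  intro a b p
  induction p with
  | nil => intro h1 h2; exact absurd h1 h2
  | @cons x y z hxy q ih =>
    intro h1 h2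
    by_cases hy : y ∈ cut S₁ d m
    · exact List.mem_cons_of_mem _ (ih hy h2)
    · obtain ⟨rfl, rfl⟩ := front hb hm h1 hy hxy
      exact List.mem_cons_self

/-- No cycle in `G` passes through any vertex of the bridge path. -/
lemma no_cycle_d (hb : BridgeSetup G S₁ S₂ k d u w) {v : V} {c : G.Walk v v}
    (hc : c.IsCycle) {i : ℕ} (hi : i < k) : d i ∉ c.support := by
  classical
  intro hmem
  have hcyc : (c.rotate (d i) hmem).IsCycle := hc.rotate hmem
  obtain ⟨b₁, hadj, q, heq⟩ := SimpleGraph.Walk.not_nil_iff.mp hcyc.not_nil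
  rw [heq] at hcyc
  have hnodup := hcyc.isTrail.edges_nodup
  rw [Walk.edges_cons, List.nodup_cons] at hnodup
  have hb₁ : b₁ ∈ G.neighborSet (d i) := hadj
  rw [hb.d_neighbors i hi] at hb₁
  rcases hb₁ with h | h
  · -- b₁ is the previous vertex : use cut i, walk q goes from inside to outside (d i)
    have hin : b₁ ∈ cut S₁ d i := by
      rw [h]
      split
      · exact s1_mem_cut hb.u_mem
      · exact d_mem_cut (by omega)
    have hout : d i ∉ cut S₁ d i := d_not_mem_cut hb hi le_rfl
    have hedge := conf_edge hb (le_of_lt hi) q hin hout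
    rw [if_neg (show ¬ i = k by omega)] at hedge
    apply hnodup.1
    subst h
    rw [Sym2.eq_swap]
    exact hedge
  · -- b₁ is the next vertex : use cut (i+1)
    rw [Set.mem_singleton_iff] at h
    have hin : d i ∈ cut S₁ d (i+1) := d_mem_cut (by omega)
    have hout : b₁ ∉ cut S₁ d (i+1) := by
      rw [h]
      split
      · exact w_not_mem_cut hb (by omega)
      · exact d_not_mem_cut hb (by omega) le_rfl
    have hedge := conf_edge hb (show i + 1 ≤ k by omega) q.reverse hin hout
    rw [Walk.edges_reverse, List.mem_reverse] at hedge
    have h2 : (if i + 1 = k then w else d (i + 1)) = b₁ := by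
      rw [h]
      by_cases hik : i = k - 1
      · rw [if_pos (by omega), if_pos hik]
      · rw [if_neg (by omega), if_neg hik]
    rw [if_neg (by omega), Nat.add_sub_cancel, h2] at hedge
    exact hnodup.1 hedge

end BridgeAux

open BridgeAux in
/-- let `A` be a graph in which every two vertices lie on a common cycle
and every vertex has valency ≥ 2, and let `B` (here `G`) be obtained from two disjoint
copies `A₁`, `A₂` of `A` (the images of the graph embeddings `ι₁`, `ι₂`) by adding a
connecting path `d 0, ..., d (k-1)` whose vertices have valency 2 in `B`. Then the image
of any graph embedding of `A` into `B` is contained entirely in `A₁` or entirely in `A₂`. -/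
theorem embedding_image_in_one_side {V W : Type} (A : SimpleGraph W)
    (hcycles : ∀ x y : W, ∃ (v : W) (c : A.Walk v v), c.IsCycle ∧
      x ∈ c.support ∧ y ∈ c.support)
    (hval : ∀ x : W, ∃ y z : W, y ≠ z ∧ A.Adj x y ∧ A.Adj x z)
    (G : SimpleGraph V) (ι₁ ι₂ : A ↪g G) (k : ℕ) (d : ℕ → V) (u w : V)
    (hb : BridgeSetup G (Set.range ι₁) (Set.range ι₂) k d u w) :
    ∀ f : A ↪g G, Set.range (f : W → V) ⊆ Set.range ι₁ ∨
      Set.range (f : W → V) ⊆ Set.range ι₂ := by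
  intro f
  set S₁ := Set.range ι₁ with hS₁
  set S₂ := Set.range ι₂ with hS₂
  classical
  by_contra hcon
  obtain ⟨h1, h2⟩ := not_or.mp hcon
  obtain ⟨a₁, ha₁, hx⟩ := Set.not_subset.mp h1
  obtain ⟨x, rfl⟩ := ha₁
  obtain ⟨a₂, ha₂, hy⟩ := Set.not_subset.mp h2
  obtain ⟨y, rfl⟩ := ha₂
  -- get a common cycle through x and y, mapped into G
  obtain ⟨v0, cA, hcA, hxs, hys⟩ := hcycles x y
  have hinj : Function.Injective (f.toHom : W → V) := by
    simpa using f.injective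
  have hcyc : (cA.map f.toHom).IsCycle := hcA.map hinj
  set c := cA.map f.toHom with hc
  have hxc : f x ∈ c.support := by
    rw [hc, Walk.support_map]
    exact List.mem_map_of_mem hxs
  have hyc : f y ∈ c.support := by
    rw [hc, Walk.support_map]
    exact List.mem_map_of_mem hys
  -- the cycle avoids the bridge vertices
  have hnod : ∀ i < k, d i ∉ c.support := fun i hi => no_cycle_d hb hcyc hi
  -- each image vertex is in S₁ ∪ S₂
  have himg : ∀ z : W, f z ∈ S₁ ∨ f z ∈ S₂ := by
    intro z
    obtain ⟨v1, cZ, hcZ, hzs, _⟩ := hcycles z z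
    have hcycZ : (cZ.map f.toHom).IsCycle := hcZ.map hinj
    have hzc : f z ∈ (cZ.map f.toHom).support := by
      rw [Walk.support_map]; exact List.mem_map_of_mem hzs
    rcases hb.cover (f z) with h | h | ⟨i, hi, he⟩
    · exact Or.inl h
    · exact Or.inr h
    · exact absurd (he ▸ hzc) (no_cycle_d hb hcycZ hi)
  have hxS₂ : f x ∈ S₂ := (himg x).resolve_left hx
  have hyS₁ : f y ∈ S₁ := (himg y).resolve_right fun h => hy h
  -- build a walk from f y to f x inside the cycle's support
  set p := ((c.takeUntil (f y) hyc).reverse.append (c.takeUntil (f x) hxc)) with hp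
  have hpsup : ∀ z ∈ p.support, z ∈ c.support := by
    intro z hz
    rw [hp, Walk.mem_support_append_iff] at hz
    rcases hz with hz | hz
    · rw [Walk.support_reverse, List.mem_reverse] at hz
      exact Walk.support_takeUntil_subset _ _ hz
    · exact Walk.support_takeUntil_subset _ _ hz
  -- applying the cut lemma at m = k yields a contradiction
  have hyin : f y ∈ cut S₁ d k := s1_mem_cut hyS₁
  have hxout : f x ∉ cut S₁ d k := s2_not_mem_cut hb le_rfl hxS₂
  have hedge := conf_edge hb le_rfl p hyin hxout
  have hk1 : d (k-1) ∈ p.support := by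
    rw [if_neg (by have := hb.one_le_k; omega)] at hedge
    exact Walk.fst_mem_support_of_mem_edges p hedge
  exact hnod (k-1) (by have := hb.one_le_k; omega) (hpsup _ hk1)
end
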